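/- Let κ be an infinite cardinal and S a set with 2 ≤ |S|. Then any maximal family of pairwise ∼_κ-inequivalent functions from κ to S has cardinality at least 2^κ; if moreover |S| ≤ 2^κ, the number of ∼_κ-equivalence classes of functions κ → S is exactly 2^κ. -/

import Mathlib

/-! Reading a function `h : X → S` through the first coordinate of a bijection `X × X ≃ X`
spreads each value of `h` over `|X|` points, so distinct `h` become `∼_κ`-inequivalent.
This gives `|S|^κ ≥ 2^κ` pairwise inequivalent functions, and any map identifying only
`∼_κ`-equivalent functions (the quotient map, or a choice of nearby member of a maximal
family) is injective on them. The upper bound is `|S|^κ ≤ (2^κ)^κ = 2^κ`. -/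

open Cardinal

section AlmostEq

variable {X S : Type*}

def AlmostEq (κ : Cardinal) (f g : X → S) : Prop := #{x | f x ≠ g x} < κ

variable {κ : Cardinal}

theorem AlmostEq.refl (hκ : 0 < κ) (f : X → S) : AlmostEq κ f f := by
  simpa [AlmostEq] using hκ

theorem AlmostEq.symm {f g : X → S} (h : AlmostEq κ f g) : AlmostEq κ g f := by
  simpa only [AlmostEq, ne_comm] using h

theorem AlmostEq.trans (hκ : ℵ₀ ≤ κ) {f g k : X → S} (hfg : AlmostEq κ f g)
    (hgk : AlmostEq κ g k) : AlmostEq κ f k := by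
  have hsub : {x | f x ≠ k x} ⊆ {x | f x ≠ g x} ∪ {x | g x ≠ k x} := fun x hx => by
    by_contra! hc
    simp_all
  calc #{x | f x ≠ k x} ≤ #({x | f x ≠ g x} ∪ {x | g x ≠ k x} : Set X) :=
        mk_le_mk_of_subset hsub
    _ ≤ #{x | f x ≠ g x} + #{x | g x ≠ k x} := mk_union_le _ _
    _ < κ := add_lt_of_lt hκ hfg hgk

theorem AlmostEq.equivalence (hκ : ℵ₀ ≤ κ) :
    Equivalence (AlmostEq κ : (X → S) → (X → S) → Prop) :=
  ⟨AlmostEq.refl (aleph0_pos.trans_le hκ), AlmostEq.symm, AlmostEq.trans hκ⟩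

theorem not_almostEq_comp_fst (e : X × X ≃ X) {h h' : X → S} (hne : h ≠ h') :
    ¬ AlmostEq #X (fun x => h (e.symm x).1) (fun x => h' (e.symm x).1) := by
  obtain ⟨a, ha⟩ := Function.ne_iff.mp hne
  refine not_lt.mpr (mk_le_of_injective (f := fun y => ⟨e (a, y), by simpa using ha⟩) ?_)
  intro y z hyz
  simpa using e.injective (congrArg Subtype.val hyz)

end AlmostEq

theorem two_power_le_of_eq_imp_almostEq {X S T : Type u} [Infinite X] (hS : 2 ≤ #S)
    (φ : (X → S) → T) (hφ : ∀ f g, φ f = φ g → AlmostEq #X f g) : 2 ^ #X ≤ #T := by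
  obtain ⟨e⟩ : Nonempty (X × X ≃ X) := by
    rw [← Cardinal.eq, mk_prod, lift_id, mul_eq_self (aleph0_le_mk X)]
  have hinj : Function.Injective fun h : X → S => φ fun x => h (e.symm x).1 := by
    intro h h' hhh
    by_contra hne
    exact not_almostEq_comp_fst e hne (hφ _ _ hhh)
  calc 2 ^ #X ≤ #S ^ #X := power_le_power_right hS
    _ = #(X → S) := power_def S X
    _ ≤ #T := mk_le_of_injective hinj

theorem mk_arrow_le_two_power {X S : Type u} [Infinite X] (hS : #S ≤ 2 ^ #X) :
    #(X → S) ≤ 2 ^ #X :=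
  calc #(X → S) = #S ^ #X := (power_def S X).symm
    _ ≤ (2 ^ #X) ^ #X := power_le_power_right hS
    _ = 2 ^ #X := by rw [← power_mul, mul_eq_self (aleph0_le_mk X)]

/-- For an infinite `X` of cardinality `κ` and `S` with at least two elements: any maximal
family of pairwise `∼_κ`-inequivalent functions `X → S` has cardinality at least `2^κ`;
and if `|S| ≤ 2^κ` then the number of `∼_κ`-classes of functions `X → S` is exactly `2^κ`. -/
theorem stmt_10 {X S : Type u} [Infinite X] (hS : 2 ≤ Cardinal.mk S) :
    (∀ B : Set (X → S),
      (∀ f ∈ B, ∀ g ∈ B, f ≠ g → ¬ Cardinal.mk {x | f x ≠ g x} < Cardinal.mk X) →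
      (∀ f : X → S, ∃ g ∈ B, Cardinal.mk {x | f x ≠ g x} < Cardinal.mk X) →
      2 ^ Cardinal.mk X ≤ Cardinal.mk B) ∧
    (Cardinal.mk S ≤ 2 ^ Cardinal.mk X →
      Cardinal.mk
        (Quot (fun f g : X → S => Cardinal.mk {x | f x ≠ g x} < Cardinal.mk X)) =
        2 ^ Cardinal.mk X) := by
  have hX := aleph0_le_mk X
  refine ⟨fun B _ hB_max => ?_, fun hS_le => ?_⟩
  · choose g hgB hg using hB_max
    refine two_power_le_of_eq_imp_almostEq hS (fun f => (⟨g f, hgB f⟩ : B))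
      fun f f' hff' => ?_
    have hgg : g f = g f' := congrArg Subtype.val hff'
    exact AlmostEq.trans hX (hg f) (hgg ▸ AlmostEq.symm (hg f'))
  · change #(Quot (AlmostEq #X)) = _
    refine le_antisymm (mk_quot_le.trans (mk_arrow_le_two_power hS_le)) ?_
    exact two_power_le_of_eq_imp_almostEq hS (Quot.mk _) fun f g h =>
      (AlmostEq.equivalence hX).eqvGen_iff.mp (Quot.eq.mp h)
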